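/- arXiv:1001.3556 — 2 statements merged into one kernel-verified Lean document; each statement's English description precedes it below -/
import Mathlib

section
/- For t > 0, the function Θ(t) = ∑_{n=1}^∞ 1/(e^{nt} - 1) satisfies Θ(t) = -ln(t)/t + γ/t + 1/4 + O(t) as t → 0⁺, where γ is Euler's constant. -/
/-!
Split `1 / (eˣ - 1) = H x + e⁻ˣ / x`. Summed over `x = n t`, `n ≥ 1`, the second part is the
logarithmic series `-log (1 - e⁻ᵗ) / t = -log t / t + 1 / 2 + O(t)`. The function `H` extends
analytically to all of `ℝ` with `H 0 = 1 / 2`, and `H`, `H''` decay like `e⁻ˣ`, so the trapezoidal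
rule gives `t ∑_{n ≥ 1} H (n t) = ∫₀^∞ H - t / 4 + O(t²)`. Finally `∫₀^∞ H = γ`: expanding
`1 / (eˣ - 1)` geometrically writes `H` as a series of Frullani integrands whose integrals
`1 / (k + 1) - log ((k + 2) / (k + 1))` telescope to the limit defining `γ`.
-/

open Filter Asymptotics

/-- The trace of the Euclidean wave group: `Θ(t) = ∑_{n=1}^∞ 1/(e^{nt}-1)`. -/
noncomputable def Theta (t : ℝ) : ℝ := ∑' n : ℕ, 1 / (Real.exp (((n : ℝ) + 1) * t) - 1)

open Real Set Topology MeasureTheory intervalIntegral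

theorem AnalyticOnNhd.dslope {𝕜 E : Type*} [NontriviallyNormedField 𝕜] [NormedAddCommGroup E]
    [NormedSpace 𝕜 E] {f : 𝕜 → E} {s : Set 𝕜} (hf : AnalyticOnNhd 𝕜 f s) (a : 𝕜) :
    AnalyticOnNhd 𝕜 (dslope f a) s := by
  intro x hx
  rcases eq_or_ne x a with rfl | hxa
  · obtain ⟨p, hp⟩ := hf x hx
    exact hp.has_fpower_series_dslope_fslope.analyticAt
  · have h : AnalyticAt 𝕜 (fun y => (y - a)⁻¹ • (f y - f a)) x :=
      ((analyticAt_id.sub analyticAt_const).inv (sub_ne_zero.2 hxa)).smul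
        ((hf x hx).sub analyticAt_const)
    refine h.congr ?_
    filter_upwards [eventually_ne_nhds hxa] with y hy
    rw [dslope_of_ne f hy, slope_def_module]

theorem abs_trapezoid_sub_integral_le {f f' f'' : ℝ → ℝ} {a b : ℝ} (hab : a ≤ b)
    (hf : ∀ x ∈ uIcc a b, HasDerivAt f (f' x) x) (hf' : ∀ x ∈ uIcc a b, HasDerivAt f' (f'' x) x)
    (hf'' : IntervalIntegrable f'' volume a b) :
    |(b - a) * (f a + f b) / 2 - ∫ x in a..b, f x| ≤ (b - a) ^ 2 / 8 * ∫ x in a..b, |f'' x| := by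
  set φ : ℝ → ℝ := fun x => (x - a) * (b - x) / 2
  have hφ : ∀ x ∈ uIcc a b, HasDerivAt φ ((a + b - 2 * x) / 2) x := fun x _ =>
    ((((hasDerivAt_id' x).sub_const a).mul ((hasDerivAt_id' x).const_sub b)).div_const
      2).congr_deriv (by ring)
  have hφ' : ∀ x ∈ uIcc a b, HasDerivAt (fun x => (a + b - 2 * x) / 2) (-1) x := fun x _ =>
    ((((hasDerivAt_id' x).const_mul 2).const_sub (a + b)).div_const 2).congr_deriv (by ring)
  have hf'_int : IntervalIntegrable f' volume a b :=
    ContinuousOn.intervalIntegrable fun x hx => (hf' x hx).continuousAt.continuousWithinAt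
  -- integrating by parts twice against the kernel `φ`, which vanishes at both ends
  have hparts : (b - a) * (f a + f b) / 2 - ∫ x in a..b, f x = ∫ x in a..b, φ x * f'' x := by
    rw [integral_mul_deriv_eq_deriv_mul hφ hf' (Continuous.intervalIntegrable (by fun_prop) _ _)
      hf'', integral_mul_deriv_eq_deriv_mul hφ' hf intervalIntegrable_const hf'_int]
    simp only [φ, neg_one_mul, intervalIntegral.integral_neg]
    ring
  have hφ_le : ∀ x ∈ Icc a b, |φ x| ≤ (b - a) ^ 2 / 8 := fun x hx => by
    rw [abs_of_nonneg (by simp only [φ]; nlinarith [hx.1, hx.2])]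
    simp only [φ]
    nlinarith [sq_nonneg (a + b - 2 * x)]
  rw [hparts, ← intervalIntegral.integral_const_mul]
  refine (abs_integral_le_integral_abs hab).trans (integral_mono_on hab ?_ ?_ fun x hx => ?_)
  · exact (hf''.continuousOn_mul (by fun_prop)).abs
  · exact hf''.abs.const_mul _
  · rw [abs_mul]
    exact mul_le_mul_of_nonneg_right (hφ_le x hx) (abs_nonneg _)

theorem abs_sum_trapezoid_sub_integral_le {f f' f'' : ℝ → ℝ}
    (hf : ∀ x, 0 ≤ x → HasDerivAt f (f' x) x) (hf' : ∀ x, 0 ≤ x → HasDerivAt f' (f'' x) x)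
    (hf'' : IntegrableOn f'' (Ioi 0)) {t : ℝ} (ht : 0 < t) (N : ℕ) :
    |t * ∑ n ∈ Finset.range N, f (n * t) + t * (f (N * t) - f 0) / 2 - ∫ x in 0..N * t, f x|
      ≤ t ^ 2 / 8 * ∫ x in Ioi 0, |f'' x| := by
  set a : ℕ → ℝ := fun n => n * t with ha
  have ha_nonneg : ∀ n, 0 ≤ a n := fun n => by positivity
  have ha_step : ∀ n, a (n + 1) - a n = t := fun n => by simp only [ha]; push_cast; ring
  have ha_le : ∀ n, a n ≤ a (n + 1) := fun n => by linarith [ha_step n]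
  have hmem : ∀ n, ∀ x ∈ uIcc (a n) (a (n + 1)), 0 ≤ x := fun n x hx =>
    (ha_nonneg n).trans (by rw [uIcc_of_le (ha_le n)] at hx; exact hx.1)
  have hf_int : ∀ n, IntervalIntegrable f volume (a n) (a (n + 1)) := fun n =>
    ContinuousOn.intervalIntegrable fun x hx =>
      (hf x (hmem n x hx)).continuousAt.continuousWithinAt
  have hf''_int : ∀ n, IntervalIntegrable f'' volume (a n) (a (n + 1)) := fun n => by
    rw [intervalIntegrable_iff_integrableOn_Ioc_of_le (ha_le n)]
    exact hf''.mono_set fun x hx => (ha_nonneg n).trans_lt hx.1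
  have hsum : t * ∑ n ∈ Finset.range N, f (a n) + t * (f (a N) - f 0) / 2
      = ∑ n ∈ Finset.range N, (a (n + 1) - a n) * (f (a n) + f (a (n + 1))) / 2 := by
    simp only [ha_step]
    induction N with
    | zero => simp [ha]
    | succ N ih => rw [Finset.sum_range_succ, Finset.sum_range_succ, ← ih]; ring
  have hI : ∫ x in 0..N * t, f x = ∑ n ∈ Finset.range N, ∫ x in a n..a (n + 1), f x := by
    rw [sum_integral_adjacent_intervals fun n _ => hf_int n]; simp [ha]
  have hI'' : ∫ x in 0..N * t, |f'' x| = ∑ n ∈ Finset.range N, ∫ x in a n..a (n + 1), |f'' x| := by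
    rw [sum_integral_adjacent_intervals fun n _ => (hf''_int n).abs]; simp [ha]
  calc _ = |∑ n ∈ Finset.range N, ((a (n + 1) - a n) * (f (a n) + f (a (n + 1))) / 2
        - ∫ x in a n..a (n + 1), f x)| := by rw [Finset.sum_sub_distrib, ← hsum, ← hI]
    _ ≤ ∑ n ∈ Finset.range N, (a (n + 1) - a n) ^ 2 / 8 * ∫ x in a n..a (n + 1), |f'' x| :=
      (Finset.abs_sum_le_sum_abs _ _).trans <| Finset.sum_le_sum fun n _ =>
        abs_trapezoid_sub_integral_le (ha_le n) (fun x hx => hf x (hmem n x hx))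
          (fun x hx => hf' x (hmem n x hx)) (hf''_int n)
    _ = t ^ 2 / 8 * ∫ x in 0..N * t, |f'' x| := by simp only [ha_step, hI'', Finset.mul_sum]
    _ ≤ t ^ 2 / 8 * ∫ x in Ioi 0, |f'' x| := by
      gcongr
      rw [intervalIntegral.integral_of_le (by positivity)]
      exact setIntegral_mono_set hf''.abs (Eventually.of_forall fun x => abs_nonneg _)
        Ioc_subset_Ioi_self.eventuallyLE

theorem abs_tsum_trapezoid_sub_integral_le {f f' f'' : ℝ → ℝ}
    (hf : ∀ x, 0 ≤ x → HasDerivAt f (f' x) x) (hf' : ∀ x, 0 ≤ x → HasDerivAt f' (f'' x) x)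
    (hfi : IntegrableOn f (Ioi 0)) (hf'' : IntegrableOn f'' (Ioi 0)) {t : ℝ} (ht : 0 < t)
    (hs : Summable fun n : ℕ => f (n * t)) :
    |t * ∑' n : ℕ, f (n * t) - t * f 0 / 2 - ∫ x in Ioi 0, f x|
      ≤ t ^ 2 / 8 * ∫ x in Ioi 0, |f'' x| := by
  have hlim : Tendsto (fun N : ℕ => t * ∑ n ∈ Finset.range N, f (n * t) + t * (f (N * t) - f 0) / 2
      - ∫ x in 0..N * t, f x) atTop
      (𝓝 (t * ∑' n : ℕ, f (n * t) + t * (0 - f 0) / 2 - ∫ x in Ioi 0, f x)) := by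
    refine ((hs.hasSum.tendsto_sum_nat.const_mul t).add
      (((hs.tendsto_atTop_zero.sub_const _).const_mul t).div_const 2)).sub ?_
    exact intervalIntegral_tendsto_integral_Ioi 0 hfi
      (tendsto_natCast_atTop_atTop.atTop_mul_const ht)
  have h := le_of_tendsto hlim.abs
    (Eventually.of_forall (abs_sum_trapezoid_sub_integral_le hf hf' hf'' ht))
  rwa [zero_sub, mul_neg, neg_div, ← sub_eq_add_neg] at h

theorem isBigO_exp_neg_of_eq_mul {f g : ℝ → ℝ} {c : ℝ} (hfg : ∀ᶠ x in atTop, f x = exp (-x) * g x)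
    (hg : Tendsto g atTop (𝓝 c)) : f =O[atTop] fun x => exp (-x) := by
  simpa using ((isBigO_refl (fun x => exp (-x)) atTop).mul (hg.isBigO_one ℝ)).congr'
    (hfg.mono fun x hx => hx.symm) EventuallyEq.rfl

theorem hasSum_eulerMascheroniConstant :
    HasSum (fun k : ℕ => 1 / (k + 1 : ℝ) - log ((k + 2) / (k + 1))) eulerMascheroniConstant := by
  have hterm : ∀ k : ℕ, 1 / (k + 1 : ℝ) - log ((k + 2) / (k + 1))
      = eulerMascheroniSeq (k + 1) - eulerMascheroniSeq k := fun k => by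
    rw [eulerMascheroniSeq, eulerMascheroniSeq, harmonic_succ,
      log_div (by positivity) (by positivity)]
    push_cast
    ring_nf
  have hnonneg : ∀ k : ℕ, 0 ≤ 1 / (k + 1 : ℝ) - log ((k + 2) / (k + 1)) := fun k => by
    have h := log_le_sub_one_of_pos (show 0 < ((k : ℝ) + 2) / (k + 1) by positivity)
    have : ((k : ℝ) + 2) / (k + 1) - 1 = 1 / (k + 1) := by field_simp; ring
    linarith
  rw [hasSum_iff_tendsto_nat_of_nonneg hnonneg]
  refine tendsto_eulerMascheroniSeq.congr fun N => ?_
  rw [Finset.sum_congr rfl fun k _ => hterm k, Finset.sum_range_sub]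
  simp [eulerMascheroniSeq]

lemma one_sub_exp_neg_pos {x : ℝ} (hx : 0 < x) : 0 < 1 - exp (-x) := by
  linarith [exp_lt_one_iff.2 (neg_lt_zero.2 hx)]

lemma exp_sub_one_pos {x : ℝ} (hx : 0 < x) : 0 < exp x - 1 := by
  linarith [one_lt_exp_iff.2 hx]

namespace Theta

/- `B x = (eˣ - 1) / x` and `A x = (e⁻ˣ - 1 + x) / x²`, written as slopes so that they are analytic
through `x = 0`; `H = A / B` equals `1 / (eˣ - 1) - e⁻ˣ / x` for `x ≠ 0`. -/
noncomputable def B : ℝ → ℝ := dslope exp 0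

noncomputable def A : ℝ → ℝ := dslope (dslope (fun x => exp (-x)) 0) 0

noncomputable def H : ℝ → ℝ := A / B

lemma B_eq {x : ℝ} (hx : x ≠ 0) : B x = (exp x - 1) / x := by
  simp [B, dslope_of_ne _ hx, slope_def_field]

lemma A_eq {x : ℝ} (hx : x ≠ 0) : A x = (exp (-x) - 1 + x) / x ^ 2 := by
  have h : deriv (fun x => exp (-x)) 0 = -1 := by simpa using (hasDerivAt_neg (0 : ℝ)).exp.deriv
  simp only [A, dslope_of_ne _ hx, slope_def_field, dslope_same, h, sub_zero, neg_zero, exp_zero]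
  field_simp
  ring

lemma B_zero : B 0 = 1 := by simp [B, dslope_same]

lemma B_pos (x : ℝ) : 0 < B x := by
  rcases eq_or_ne x 0 with rfl | hx
  · simp [B_zero]
  · rw [B_eq hx]
    rcases hx.lt_or_gt with h | h
    · exact div_pos_of_neg_of_neg (by linarith [exp_lt_one_iff.2 h]) h
    · exact div_pos (exp_sub_one_pos h) h

lemma analyticOnNhd_B : AnalyticOnNhd ℝ B univ := analyticOnNhd_rexp.dslope 0

lemma analyticOnNhd_A : AnalyticOnNhd ℝ A univ :=
  have h : AnalyticOnNhd ℝ (fun x => exp (-x)) univ := fun x _ => by fun_prop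
  (h.dslope 0).dslope 0

lemma analyticOnNhd_H : AnalyticOnNhd ℝ H univ :=
  analyticOnNhd_A.div analyticOnNhd_B fun x _ => (B_pos x).ne'

lemma abs_A_sub_half_le {x : ℝ} (hx0 : x ≠ 0) (hx : |x| ≤ 1) : |A x - 1 / 2| ≤ |x| := by
  have h := Real.exp_bound (x := -x) (by rwa [abs_neg]) (n := 3) (by norm_num)
  simp only [Finset.sum_range_succ, Finset.sum_range_zero, abs_neg] at h
  norm_num [Nat.factorial] at h
  have hx2 : 0 < x ^ 2 := by positivity
  have key : A x - 1 / 2 = (exp (-x) - (1 + -x + x ^ 2 / 2)) / x ^ 2 := by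
    rw [A_eq hx0]; field_simp; ring
  rw [key, abs_div, abs_of_pos hx2, div_le_iff₀ hx2]
  calc _ ≤ |x| ^ 3 * (2 / 9) := h
    _ ≤ |x| * x ^ 2 := by rw [← sq_abs x]; nlinarith [abs_nonneg x, sq_nonneg x]

lemma A_zero : A 0 = 1 / 2 := by
  have h : Tendsto A (𝓝[≠] 0) (𝓝 (1 / 2)) := by
    rw [tendsto_iff_norm_sub_tendsto_zero]
    refine squeeze_zero' (Eventually.of_forall fun _ => norm_nonneg _) ?_
      (tendsto_norm_zero.mono_left nhdsWithin_le_nhds)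
    filter_upwards [self_mem_nhdsWithin,
      nhdsWithin_le_nhds (Metric.closedBall_mem_nhds (0 : ℝ) one_pos)] with x hx0 hx1
    simpa using abs_A_sub_half_le hx0 (by simpa using hx1)
  exact tendsto_nhds_unique ((analyticOnNhd_A 0 trivial).continuousAt.tendsto.mono_left
    nhdsWithin_le_nhds) h

lemma H_zero : H 0 = 1 / 2 := by simp [H, A_zero, B_zero]

lemma H_eq {x : ℝ} (hx : 0 < x) : H x = exp (-x) * (1 / (1 - exp (-x)) - 1 / x) := by
  have h := (one_sub_exp_neg_pos hx).ne'
  have h' := (exp_sub_one_pos hx).ne'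
  rw [exp_neg] at h
  rw [H, Pi.div_apply, A_eq hx.ne', B_eq hx.ne', exp_neg]
  field_simp
  ring

lemma one_div_exp_sub_one_eq {x : ℝ} (hx : 0 < x) : 1 / (exp x - 1) = H x + exp (-x) / x := by
  have h := (one_sub_exp_neg_pos hx).ne'
  have h' := (exp_sub_one_pos hx).ne'
  rw [exp_neg] at h
  rw [H_eq hx, exp_neg]
  field_simp
  ring

lemma hasDerivAt_H {x : ℝ} (hx : 0 < x) :
    HasDerivAt H (exp (-x) * (1 / x + 1 / x ^ 2 - 1 / (1 - exp (-x)) ^ 2)) x := by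
  have h := (one_sub_exp_neg_pos hx).ne'
  have hE : HasDerivAt (fun y => exp (-y)) (-exp (-x)) x := by
    simpa using (hasDerivAt_neg x).exp
  have hg := ((hasDerivAt_const x (1 : ℝ)).div ((hasDerivAt_const x 1).sub hE) h).sub
    ((hasDerivAt_const x (1 : ℝ)).div (hasDerivAt_id x) hx.ne')
  refine ((hE.mul hg).congr_of_eventuallyEq ?_).congr_deriv ?_
  · filter_upwards [Ioi_mem_nhds hx] with y hy using H_eq hy
  · simp only [Pi.sub_apply, Pi.div_apply, id]
    field_simp
    ring

lemma hasDerivAt_deriv_H {x : ℝ} (hx : 0 < x) :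
    HasDerivAt (deriv H)
      (exp (-x) * ((1 + exp (-x)) / (1 - exp (-x)) ^ 3 - (1 / x + 2 / x ^ 2 + 2 / x ^ 3))) x := by
  have h := (one_sub_exp_neg_pos hx).ne'
  have hE : HasDerivAt (fun y => exp (-y)) (-exp (-x)) x := by
    simpa using (hasDerivAt_neg x).exp
  have hg := (((hasDerivAt_const x (1 : ℝ)).div (hasDerivAt_id x) hx.ne').add
    ((hasDerivAt_const x (1 : ℝ)).div ((hasDerivAt_id x).pow 2) (pow_ne_zero 2 hx.ne'))).sub
    ((hasDerivAt_const x (1 : ℝ)).div (((hasDerivAt_const x 1).sub hE).pow 2) (pow_ne_zero 2 h))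
  refine ((hE.mul hg).congr_of_eventuallyEq ?_).congr_deriv ?_
  · filter_upwards [Ioi_mem_nhds hx] with y hy using (hasDerivAt_H hy).deriv
  · simp only [Pi.add_apply, Pi.sub_apply, Pi.div_apply, Pi.pow_apply, id]
    field_simp
    ring

lemma isBigO_H : H =O[atTop] fun x => exp (-x) := by
  refine isBigO_exp_neg_of_eq_mul ((eventually_gt_atTop 0).mono fun x hx => H_eq hx) (c := 1) ?_
  have hE := tendsto_exp_neg_atTop_nhds_zero
  simpa using ((tendsto_const_nhds (x := (1 : ℝ))).div
    ((tendsto_const_nhds (x := (1 : ℝ))).sub hE) (by norm_num)).sub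
    ((tendsto_const_nhds (x := (1 : ℝ))).div_atTop tendsto_id)

lemma isBigO_deriv_deriv_H : deriv (deriv H) =O[atTop] fun x => exp (-x) := by
  refine isBigO_exp_neg_of_eq_mul
    ((eventually_gt_atTop 0).mono fun x hx => (hasDerivAt_deriv_H hx).deriv) (c := 1) ?_
  have hE := tendsto_exp_neg_atTop_nhds_zero
  have hI : ∀ n : ℕ, n ≠ 0 → Tendsto (fun x : ℝ => (2 : ℝ) / x ^ n) atTop (𝓝 0) := fun n hn =>
    tendsto_const_nhds.div_atTop (tendsto_pow_atTop hn)
  simpa using (((tendsto_const_nhds (x := (1 : ℝ))).add hE).div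
    (((tendsto_const_nhds (x := (1 : ℝ))).sub hE).pow 3) (by norm_num)).sub
    ((((tendsto_const_nhds (x := (1 : ℝ))).div_atTop tendsto_id).add (hI 2 two_ne_zero)).add
    (hI 3 three_ne_zero))

lemma summable_H {t : ℝ} (ht : 0 < t) : Summable fun n : ℕ => H (n * t) := by
  refine summable_of_isBigO_nat (g := fun n : ℕ => exp (-t) ^ n)
    (summable_geometric_of_lt_one (exp_pos _).le (exp_lt_one_iff.2 (neg_lt_zero.2 ht))) ?_
  refine (isBigO_H.comp_tendsto (tendsto_natCast_atTop_atTop.atTop_mul_const ht)).congr_right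
    fun n => ?_
  simp only [Function.comp, ← exp_nat_mul]
  ring_nf

lemma eq_tsum_H_add {t : ℝ} (ht : 0 < t) :
    Theta t = ∑' n : ℕ, H ((n + 1) * t) + -log (1 - exp (-t)) / t := by
  have hr : |exp (-t)| < 1 := by
    rw [abs_of_pos (exp_pos _)]; exact exp_lt_one_iff.2 (neg_lt_zero.2 ht)
  have hlog : HasSum (fun n : ℕ => exp (-((n + 1) * t)) / ((n + 1) * t))
      (-log (1 - exp (-t)) / t) := by
    have heq : (fun n : ℕ => exp (-t) ^ (n + 1) / (n + 1) / t)
        = fun n : ℕ => exp (-((n + 1) * t)) / ((n + 1) * t) := by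
      ext n
      rw [← exp_nat_mul, div_div]
      push_cast
      ring_nf
    exact heq ▸ (hasSum_pow_div_log_of_abs_lt_one hr).div_const t
  have hH : Summable fun n : ℕ => H ((n + 1) * t) := by
    simpa using (summable_nat_add_iff 1).2 (summable_H ht)
  rw [Theta, ← (hH.hasSum.add hlog).tsum_eq]
  exact tsum_congr fun n => one_div_exp_sub_one_eq (by positivity)

lemma one_sub_exp_neg_eq {t : ℝ} (ht : t ≠ 0) : 1 - exp (-t) = t * (1 - t * A t) := by
  rw [A_eq ht]; field_simp; ring

lemma isBigO_neg_log_one_sub_exp_neg :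
    (fun t => -log (1 - exp (-t)) / t - (-log t / t + 1 / 2)) =O[𝓝[>] 0] fun t => t := by
  refine IsBigO.of_bound 3 ?_
  filter_upwards [Ioo_mem_nhdsGT (by norm_num : (0 : ℝ) < 1 / 2)] with t ⟨ht0, ht1⟩
  have hA := abs_A_sub_half_le ht0.ne' (by rw [abs_of_pos ht0]; linarith)
  rw [abs_of_pos ht0] at hA
  set u := t * A t
  have hu0 : 0 ≤ u := by nlinarith [abs_le.1 hA]
  have hu1 : u ≤ t := by nlinarith [abs_le.1 hA]
  have hlog : |u + log (1 - u)| ≤ 2 * t ^ 2 := by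
    have h := abs_log_sub_add_sum_range_le (show |u| < 1 by rw [abs_of_nonneg hu0]; linarith) 1
    simp only [Finset.sum_range_one, zero_add, pow_one, abs_of_nonneg hu0] at h
    calc _ ≤ u ^ 2 / (1 - u) := by simpa using h
      _ ≤ 2 * t ^ 2 := by rw [div_le_iff₀ (by linarith)]; nlinarith
  have key : -log (1 - exp (-t)) / t - (-log t / t + 1 / 2)
      = -(u + log (1 - u)) / t + (A t - 1 / 2) := by
    rw [one_sub_exp_neg_eq ht0.ne', log_mul ht0.ne' (by linarith)]
    field_simp
    ring
  rw [Real.norm_eq_abs, Real.norm_eq_abs, abs_of_pos ht0, key]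
  calc _ ≤ |-(u + log (1 - u)) / t| + |A t - 1 / 2| := abs_add_le _ _
    _ ≤ 2 * t + t := by
      gcongr
      rw [abs_div, abs_neg, abs_of_pos ht0, div_le_iff₀ ht0]
      nlinarith
    _ = 3 * t := by ring

lemma mul_A_mem_Icc {x : ℝ} (hx : 0 < x) : x * A x ∈ Icc 0 1 := by
  have hA : x * A x = (exp (-x) - 1 + x) / x := by rw [A_eq hx.ne']; field_simp
  rw [hA, mem_Icc, div_le_one hx]
  exact ⟨div_nonneg (by linarith [add_one_le_exp (-x)]) hx.le,
    by linarith [exp_le_one_iff.2 (neg_nonpos.2 hx.le)]⟩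

noncomputable def phi (k : ℕ) (x : ℝ) : ℝ := exp (-(k + 1) * x) * (x * A x)

lemma hasSum_phi {x : ℝ} (hx : 0 < x) : HasSum (fun k => phi k x) (H x) := by
  have hr : exp (-x) < 1 := exp_lt_one_iff.2 (neg_lt_zero.2 hx)
  have hgeo := ((hasSum_geometric_of_lt_one (exp_pos _).le hr).mul_left (exp (-x))).mul_right
    (x * A x)
  have hphi : (fun k => phi k x) = fun k => exp (-x) * exp (-x) ^ k * (x * A x) := by
    ext k
    rw [phi, ← exp_nat_mul, ← exp_add]
    ring_nf
  have hH : H x = exp (-x) * (1 - exp (-x))⁻¹ * (x * A x) := by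
    have h := (one_sub_exp_neg_pos hx).ne'
    have h' := (exp_sub_one_pos hx).ne'
    rw [exp_neg] at h
    rw [H, Pi.div_apply, B_eq hx.ne', exp_neg]
    field_simp
  rwa [hphi, hH]

lemma continuous_phi (k : ℕ) : Continuous (phi k) :=
  (continuous_const.mul continuous_id).rexp.mul (continuous_id.mul analyticOnNhd_A.continuous)

lemma phi_eq {k : ℕ} {x : ℝ} (hx : 0 < x) :
    phi k x = exp (-(k + 1) * x) - x⁻¹ * (exp (-((k + 1) * x)) - exp (-((k + 2) * x))) := by
  have h : exp (-((k + 2) * x)) = exp (-(k + 1) * x) * exp (-x) := by rw [← exp_add]; ring_nf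
  rw [phi, A_eq hx.ne', h, neg_mul]
  field_simp
  ring

lemma integrableOn_phi (k : ℕ) : IntegrableOn (phi k) (Ioi 0) := by
  refine (exp_neg_integrableOn_Ioi 0 (by positivity : (0 : ℝ) < k + 1)).mono'
    (continuous_phi k).aestronglyMeasurable ?_
  filter_upwards [ae_restrict_mem measurableSet_Ioi] with x hx
  have h := mul_A_mem_Icc hx
  rw [phi, norm_mul, Real.norm_of_nonneg (exp_pos _).le, Real.norm_of_nonneg h.1, neg_mul]
  exact mul_le_of_le_one_right (exp_pos _).le h.2

lemma integral_phi (k : ℕ) :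
    ∫ x in Ioi 0, phi k x = 1 / (k + 1 : ℝ) - log ((k + 2) / (k + 1)) := by
  have hk : (0 : ℝ) < k + 1 := by positivity
  have hexp := exp_neg_integrableOn_Ioi 0 hk
  have hphi : EqOn (phi k)
      (fun x => exp (-(k + 1) * x) - x⁻¹ • (exp (-((k + 1) * x)) - exp (-((k + 2) * x))))
      (Ioi 0) := fun x hx => phi_eq hx
  have hfrullani : IntegrableOn
      (fun x : ℝ => x⁻¹ • (exp (-((k + 1) * x)) - exp (-((k + 2) * x)))) (Ioi 0) :=
    (hexp.sub ((integrableOn_phi k).congr_fun hphi measurableSet_Ioi)).congr_fun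
      (fun x _ => by simp) measurableSet_Ioi
  rw [setIntegral_congr_fun measurableSet_Ioi hphi, integral_sub hexp hfrullani,
    Frullani.integral_Ioi_eq (f := fun y => exp (-y))
      (continuous_neg.rexp.locallyIntegrable.locallyIntegrableOn _) hk (by positivity)
      ((continuous_neg.rexp.tendsto' 0 1 (by simp)).mono_left nhdsWithin_le_nhds)
      tendsto_exp_neg_atTop_nhds_zero hfrullani, integral_exp_mul_Ioi (by linarith), smul_eq_mul]
  field_simp
  simp

lemma integral_H : ∫ x in Ioi 0, H x = eulerMascheroniConstant := by
  have hnorm : ∀ k, ∫ x in Ioi 0, ‖phi k x‖ = 1 / (k + 1 : ℝ) - log ((k + 2) / (k + 1)) :=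
    fun k => by
      rw [← integral_phi]
      refine setIntegral_congr_fun measurableSet_Ioi fun x hx => Real.norm_of_nonneg ?_
      exact mul_nonneg (exp_pos _).le (mul_A_mem_Icc hx).1
  calc ∫ x in Ioi 0, H x = ∫ x in Ioi 0, ∑' k, phi k x :=
        setIntegral_congr_fun measurableSet_Ioi fun x hx => (hasSum_phi hx).tsum_eq.symm
    _ = ∑' k, ∫ x in Ioi 0, phi k x := (integral_tsum_of_summable_integral_norm integrableOn_phi
        (by simpa only [hnorm] using hasSum_eulerMascheroniConstant.summable)).symm
    _ = eulerMascheroniConstant := by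
      simpa only [integral_phi] using hasSum_eulerMascheroniConstant.tsum_eq

lemma isBigO_tsum_H :
    (fun t => ∑' n : ℕ, H ((n + 1) * t) + 1 / 4 - eulerMascheroniConstant / t)
      =O[𝓝[>] 0] fun t => t := by
  have hH := analyticOnNhd_H
  have hint : ∀ f : ℝ → ℝ, Continuous f → (f =O[atTop] fun x => exp (-x)) →
      IntegrableOn f (Ioi 0) :=
    fun f hf ho => integrable_of_isBigO_exp_neg one_pos hf.continuousOn (by simpa using ho)
  refine IsBigO.of_bound ((∫ x in Ioi 0, |deriv (deriv H) x|) / 8) ?_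
  filter_upwards [self_mem_nhdsWithin] with t (ht : 0 < t)
  have h := abs_tsum_trapezoid_sub_integral_le
    (fun x _ => (hH x trivial).differentiableAt.hasDerivAt)
    (fun x _ => (hH.deriv x trivial).differentiableAt.hasDerivAt)
    (hint H hH.continuous isBigO_H)
    (hint _ hH.deriv.deriv.continuous isBigO_deriv_deriv_H) ht (summable_H ht)
  rw [(summable_H ht).tsum_eq_zero_add] at h
  simp only [Nat.cast_zero, zero_mul, H_zero, integral_H, Nat.cast_add, Nat.cast_one] at h
  rw [Real.norm_eq_abs, Real.norm_eq_abs, abs_of_pos ht]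
  set S := ∑' n : ℕ, H ((n + 1) * t)
  have key : S + 1 / 4 - eulerMascheroniConstant / t
      = (t * (1 / 2 + S) - t * (1 / 2) / 2 - eulerMascheroniConstant) / t := by
    field_simp
    ring
  rw [key, abs_div, abs_of_pos ht, div_le_iff₀ ht]
  linarith

end Theta

/-- `Θ(t) = -ln t / t + γ/t + 1/4 + O(t)` as `t → 0⁺`. -/
theorem Theta_asymptotic_zero :
    (fun t : ℝ => Theta t - (-Real.log t / t + Real.eulerMascheroniConstant / t + 1 / 4))
      =O[nhdsWithin 0 (Set.Ioi 0)] (fun t : ℝ => t) := by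
  refine (Theta.isBigO_tsum_H.add Theta.isBigO_neg_log_one_sub_exp_neg).congr' ?_ EventuallyEq.rfl
  filter_upwards [self_mem_nhdsWithin] with t (ht : 0 < t)
  rw [Theta.eq_tsum_H_add ht]
  ring
end

section
/- (Abelian/Tauberian asymptotic for Laplace transforms) Let f be an L-function with f(t) ~ B t^β L(t) as t → 0⁺, where β > -1, B ∈ ℂ, and L is slowly varying at 0 (L(ut)/L(t) → 1 as t → 0 for every u > 0). Then the Laplace transform f̃ satisfies f̃(s) ~ B Γ(β+1) s^{-(β+1)} L(1/s) as s → ∞ along the positive reals. -/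
open MeasureTheory Filter

/-- An `L`-function (complex-valued) in the sense of Doetsch. -/
structure IsLFunctionC (f : ℝ → ℂ) : Prop where
  loc : ∀ T₁ T₂ : ℝ, 0 < T₁ → T₁ ≤ T₂ → IntervalIntegrable f volume T₁ T₂
  int_zero : ∃ T > (0 : ℝ), IntegrableOn f (Set.Ioc 0 T) volume
  int_top : ∃ s₀ : ℝ, ∃ T > (0 : ℝ),
      IntegrableOn (fun t => f t * Real.exp (-s₀ * t)) (Set.Ioi T) volume

/-- `L` is slowly varying at `0⁺`: `L(ut)/L(t) → 1` as `t → 0⁺` for every `u > 0`. -/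
def SlowlyVaryingAtZero (L : ℝ → ℝ) : Prop :=
  ∀ u : ℝ, 0 < u →
    Tendsto (fun t => L (u * t) / L t) (nhdsWithin 0 (Set.Ioi 0)) (nhds 1)

/-- The Laplace transform `f̃(s) = ∫_0^∞ e^{-st} f(t) dt`. -/
noncomputable def laplace (f : ℝ → ℂ) (s : ℝ) : ℂ :=
  ∫ t in Set.Ioi (0 : ℝ), Real.exp (-s * t) * f t

/-!
Cut the Laplace integral at a small `δ`. Beyond `δ` it is `O(e^{-δs})`, whereas the normaliser
`Γ(β+1) s^{-(β+1)} L(1/s)` decays only polynomially, because `L(t) ≥ c t` near `0`. On `(0, δ]`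
the function `f` is within `ε t^β L(t)` of `B t^β L(t)`, so everything rests on the model integral
`∫_0^δ e^{-st} t^β L(t) dt ~ Γ(β+1) s^{-(β+1)} L(1/s)`. The substitution `t = x/s` writes it as
`s^{-(β+1)} L(1/s) ∫_0^{sδ} e^{-x} x^β L(x/s)/L(1/s) dx`, and dominated convergence applies by
Potter's bound `L(ut) ≤ e^η max(u^η, u^{-η}) L(t)`. Potter's bound is the uniform convergence
theorem for `h(x) = log L(e^{-x})`: since `h(x + c) - h(x) → 0` for each `c`, the set of
`c ∈ [0, 2]` where this difference is still large has measure tending to `0`, and any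
`c ∈ [0, 1]` is reached in two steps through points outside these exceptional sets.
-/

open Set Real Topology

section UniformConvergence

variable {h : ℝ → ℝ}

theorem tendsto_volume_Icc_inter_setOf_lt_abs_sub (hc : Continuous h)
    (hshift : ∀ c, Tendsto (fun x => h (x + c) - h x) atTop (𝓝 0)) {ε : ℝ} (hε : 0 < ε)
    (a b : ℝ) :
    Tendsto (fun x => volume (Icc a b ∩ {u | ε < |h (x + u) - h x|})) atTop (𝓝 0) := by
  have hmeas : ∀ x, MeasurableSet (Icc a b ∩ {u | ε < |h (x + u) - h x|}) := fun x =>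
    measurableSet_Icc.inter (isOpen_lt continuous_const (by fun_prop)).measurableSet
  simpa using tendsto_measure_of_tendsto_indicator atTop (A := ∅) hmeas measurableSet_Icc
    (by simp) (.of_forall fun x => inter_subset_left) fun u =>
      ((hshift u).eventually (eventually_abs_sub_lt 0 hε)).mono fun x hx => by
        simpa using fun _ _ => hx.le

theorem eventually_forall_Icc_abs_sub_le (hc : Continuous h)
    (hshift : ∀ c, Tendsto (fun x => h (x + c) - h x) atTop (𝓝 0)) {ε : ℝ} (hε : 0 < ε) :
    ∀ᶠ x in atTop, ∀ c ∈ Icc (0 : ℝ) 1, |h (x + c) - h x| ≤ ε := by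
  set bad : ℝ → Set ℝ := fun y => Icc 0 2 ∩ {v | ε / 2 < |h (y + v) - h y|}
  obtain ⟨X, hX⟩ := eventually_atTop.1 <|
    (tendsto_volume_Icc_inter_setOf_lt_abs_sub hc hshift (half_pos hε) 0 2).eventually_lt_const
      (show (0 : ENNReal) < 2⁻¹ by simp)
  filter_upwards [eventually_ge_atTop X] with x hx c ⟨hc0, hc1⟩
  obtain ⟨u, ⟨hu1, hu2⟩, hgood⟩ :
      (Icc (1 : ℝ) 2 \ (bad x ∪ (· + -c) ⁻¹' bad (x + c))).Nonempty := by
    refine nonempty_of_measure_ne_zero (μ := volume)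
      ((tsub_pos_of_lt ?_).trans_le le_measure_sdiff).ne'
    calc volume (bad x ∪ (· + -c) ⁻¹' bad (x + c))
        ≤ volume (bad x) + volume ((· + -c) ⁻¹' bad (x + c)) := measure_union_le _ _
      _ < 2⁻¹ + 2⁻¹ := by
        rw [measure_preimage_add_right]
        exact ENNReal.add_lt_add (hX x hx) (hX (x + c) (by linarith))
      _ = volume (Icc (1 : ℝ) 2) := by norm_num [ENNReal.inv_two_add_inv_two]
  simp only [bad, mem_union, mem_preimage, mem_inter_iff, mem_Icc, mem_ofPred_eq, not_or,
    not_and, not_lt] at hgood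
  have h₁ := hgood.1 ⟨by linarith, by linarith⟩
  have h₂ := hgood.2 ⟨by linarith, by linarith⟩
  rw [show x + c + (u + -c) = x + u by ring] at h₂
  calc |h (x + c) - h x| ≤ |h (x + c) - h (x + u)| + |h (x + u) - h x| := abs_sub_le ..
    _ ≤ ε := by rw [abs_sub_comm]; linarith

theorem abs_sub_le_mul_abs_sub_add_one {ε X : ℝ}
    (hX : ∀ x ≥ X, ∀ c ∈ Icc (0 : ℝ) 1, |h (x + c) - h x| ≤ ε) {x y : ℝ} (hx : X ≤ x)
    (hy : X ≤ y) : |h y - h x| ≤ ε * (|y - x| + 1) := by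
  have hε : 0 ≤ ε := (abs_nonneg _).trans (hX X le_rfl 0 ⟨le_rfl, zero_le_one⟩)
  have hstep : ∀ n : ℕ, ∀ x ≥ X, ∀ d ∈ Icc (n : ℝ) (n + 1),
      |h (x + d) - h x| ≤ ε * (n + 1) := by
    intro n
    induction n with
    | zero => simpa using hX
    | succ n ih =>
      intro x hx d ⟨hd₁, hd₂⟩
      push_cast at hd₁ hd₂ ⊢
      have h₁ := ih (x + 1) (by linarith) (d - 1) ⟨by linarith, by linarith⟩
      have h₂ := hX x hx 1 ⟨zero_le_one, le_rfl⟩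
      rw [show x + 1 + (d - 1) = x + d by ring] at h₁
      calc |h (x + d) - h x| ≤ |h (x + d) - h (x + 1)| + |h (x + 1) - h x| := abs_sub_le ..
        _ ≤ ε * (n + 1 + 1) := by linarith
  wlog hxy : x ≤ y generalizing x y
  · rw [abs_sub_comm, abs_sub_comm y]
    exact this hy hx (le_of_not_ge hxy)
  set d := y - x
  have hd : 0 ≤ d := sub_nonneg.2 hxy
  calc |h y - h x| = |h (x + d) - h x| := by rw [add_sub_cancel]
    _ ≤ ε * (⌊d⌋₊ + 1) := hstep ⌊d⌋₊ x hx d ⟨Nat.floor_le hd, (Nat.lt_floor_add_one d).le⟩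
    _ ≤ ε * (|d| + 1) := by
      gcongr
      exact (Nat.floor_le hd).trans (le_abs_self d)

end UniformConvergence

theorem exp_mul_abs_log {u : ℝ} (hu : 0 < u) {η : ℝ} (hη : 0 ≤ η) :
    exp (η * |log u|) = max (u ^ η) (u ^ (-η)) := by
  rw [abs_eq_max_neg, mul_max_of_nonneg _ _ hη, Monotone.map_max exp_monotone,
    rpow_def_of_pos hu, rpow_def_of_pos hu]
  ring_nf

theorem Filter.Eventually.forall_Ioc_nhdsGT {α : Type*} [LinearOrder α] [TopologicalSpace α]
    [OrderTopology α] [NoMaxOrder α] [DenselyOrdered α] {p : α → Prop} {a : α}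
    (h : ∀ᶠ t in 𝓝[>] a, p t) : ∀ᶠ δ in 𝓝[>] a, ∀ t ∈ Ioc a δ, p t := by
  obtain ⟨u, hu, hsub⟩ := mem_nhdsGT_iff_exists_Ioc_subset.1 h
  filter_upwards [Ioc_mem_nhdsGT hu] with δ hδ t ht using hsub ⟨ht.1, ht.2.trans hδ.2⟩

theorem setIntegral_Ioc_comp_mul_left {E : Type*} [NormedAddCommGroup E] [NormedSpace ℝ E]
    (φ : ℝ → E) {s δ : ℝ} (hs : 0 ≤ s) (hδ : 0 ≤ δ) :
    s • ∫ t in Ioc 0 δ, φ (s * t) = ∫ x in Ioc 0 (s * δ), φ x := by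
  rw [← intervalIntegral.integral_of_le hδ, intervalIntegral.smul_integral_comp_mul_left,
    mul_zero, intervalIntegral.integral_of_le (mul_nonneg hs hδ)]

theorem tendsto_setIntegral_Ioc_mul_of_dominated {E : Type*} [NormedAddCommGroup E]
    [NormedSpace ℝ E] {F : ℝ → ℝ → E} {φ : ℝ → E} {bound : ℝ → ℝ} {δ : ℝ} (hδ : 0 < δ)
    (hF_meas : ∀ᶠ s in atTop, AEStronglyMeasurable (F s) (volume.restrict (Ioi 0)))
    (h_bound : ∀ᶠ s in atTop, ∀ x ∈ Ioc 0 (s * δ), ‖F s x‖ ≤ bound x)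
    (bound_integrable : IntegrableOn bound (Ioi 0))
    (h_lim : ∀ x > 0, Tendsto (fun s => F s x) atTop (𝓝 (φ x))) :
    Tendsto (fun s => ∫ x in Ioc 0 (s * δ), F s x) atTop (𝓝 (∫ x in Ioi 0, φ x)) := by
  have hind : ∀ s, ∫ x in Ioc 0 (s * δ), F s x
      = ∫ x in Ioi 0, (Ioc 0 (s * δ)).indicator (F s) x := fun s => by
    rw [setIntegral_indicator measurableSet_Ioc,
      inter_eq_self_of_subset_right Ioc_subset_Ioi_self]
  simp_rw [hind]
  refine tendsto_integral_filter_of_dominated_convergence (fun x => |bound x|) ?_ ?_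
    bound_integrable.abs ?_
  · filter_upwards [hF_meas] with s hs using hs.indicator measurableSet_Ioc
  · filter_upwards [h_bound] with s hs
    refine ae_of_all _ fun x => ?_
    by_cases hx : x ∈ Ioc 0 (s * δ)
    · rw [indicator_of_mem hx]
      exact (hs x hx).trans (le_abs_self _)
    · rw [indicator_of_notMem hx, norm_zero]
      exact abs_nonneg _
  · refine (ae_restrict_iff' measurableSet_Ioi).2 (ae_of_all _ fun x (hx : 0 < x) => ?_)
    refine (h_lim x hx).congr' ?_
    filter_upwards [eventually_ge_atTop (x / δ)] with s hs
    rw [indicator_of_mem (show x ∈ Ioc 0 (s * δ) from ⟨hx, (div_le_iff₀ hδ).1 hs⟩)]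

theorem tendsto_div_of_norm_le_mul_exp {R : ℝ → ℂ} {D : ℝ → ℝ} {M c p δ : ℝ} (hδ : 0 < δ)
    (hc : 0 < c) (hR : ∀ᶠ s in atTop, ‖R s‖ ≤ M * exp (-δ * s))
    (hD : ∀ᶠ s in atTop, c * s ^ (-p) ≤ D s) : Tendsto (fun s => R s / D s) atTop (𝓝 0) := by
  have hlim := (tendsto_rpow_mul_exp_neg_mul_atTop_nhds_zero p δ hδ).const_mul (M / c)
  rw [mul_zero] at hlim
  refine squeeze_zero_norm' ?_ hlim
  filter_upwards [hR, hD, eventually_gt_atTop 0] with s hRs hDs hs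
  have hcs : 0 < c * s ^ (-p) := by positivity
  rw [norm_div, Complex.norm_real, norm_of_nonneg (hcs.le.trans hDs)]
  calc ‖R s‖ / D s ≤ M * exp (-δ * s) / (c * s ^ (-p)) :=
        div_le_div₀ ((norm_nonneg _).trans hRs) hRs hcs hDs
    _ = M / c * (s ^ p * exp (-δ * s)) := by
        rw [rpow_neg hs.le]
        field_simp

theorem setIntegral_Ioc_exp_neg_mul_rpow_mul_eq {L : ℝ → ℝ} {β s δ : ℝ} (hs : 0 < s)
    (hδ : 0 ≤ δ) (hL : L (1 / s) ≠ 0) :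
    ∫ t in Ioc 0 δ, exp (-s * t) * (t ^ β * L t) = s ^ (-(β + 1)) * L (1 / s) *
      ∫ x in Ioc 0 (s * δ), exp (-x) * x ^ β * (L (x * (1 / s)) / L (1 / s)) := by
  have hpt : ∀ t ∈ Ioc 0 δ, exp (-s * t) * (t ^ β * L t) = s ^ (-β) * L (1 / s) *
      (exp (-(s * t)) * (s * t) ^ β * (L (s * t * (1 / s)) / L (1 / s))) := by
    intro t ht
    rw [mul_one_div, mul_div_cancel_left₀ _ hs.ne', mul_rpow hs.le ht.1.le, rpow_neg hs.le,
      neg_mul]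
    field_simp
  have hscale : ∀ I : ℝ, s ^ (-β) * L (1 / s) * I = s ^ (-(β + 1)) * L (1 / s) * (s * I) :=
    fun I => by
      rw [neg_add, rpow_add hs, rpow_neg_one]
      field_simp
  rw [setIntegral_congr_fun measurableSet_Ioc hpt, integral_const_mul,
    ← setIntegral_Ioc_comp_mul_left _ hs.le hδ, smul_eq_mul]
  exact hscale _

namespace SlowlyVaryingAtZero

variable {L : ℝ → ℝ} {η : ℝ}

theorem exists_potter_bound (hslow : SlowlyVaryingAtZero L)
    (hLpos : ∀ t : ℝ, 0 < t → 0 < L t) (hLcont : ContinuousOn L (Ioi 0)) (hη : 0 < η) :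
    ∃ t₀ > 0, ∀ t ∈ Ioc 0 t₀, ∀ u > 0, u * t ≤ t₀ →
      L (u * t) ≤ exp η * max (u ^ η) (u ^ (-η)) * L t := by
  set h : ℝ → ℝ := fun x => log (L (exp (-x)))
  have hc : Continuous h := by
    refine continuous_iff_continuousAt.2 fun x => ?_
    have hL : ContinuousAt L (exp (-x)) := hLcont.continuousAt (Ioi_mem_nhds (exp_pos _))
    have hLexp : ContinuousAt (fun y => L (exp (-y))) x :=
      hL.comp (f := fun y => exp (-y)) (by fun_prop)
    exact hLexp.log (hLpos _ (exp_pos _)).ne'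
  have hshift : ∀ c, Tendsto (fun x => h (x + c) - h x) atTop (𝓝 0) := by
    intro c
    have hexp : Tendsto (fun x => exp (-x)) atTop (𝓝[>] 0) :=
      tendsto_exp_atBot_nhdsGT.comp tendsto_neg_atTop_atBot
    have := (continuousAt_log one_ne_zero).tendsto.comp ((hslow (exp (-c)) (exp_pos _)).comp hexp)
    rw [log_one] at this
    refine this.congr fun x => ?_
    simp only [Function.comp_apply, h, neg_add, exp_add]
    rw [log_div (hLpos _ (by positivity)).ne' (hLpos _ (exp_pos _)).ne', mul_comm]
  obtain ⟨X, hX⟩ := eventually_atTop.1 (eventually_forall_Icc_abs_sub_le hc hshift hη)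
  refine ⟨exp (-X), exp_pos _, fun t ⟨ht, htX⟩ u hu hutX => ?_⟩
  have hut : 0 < u * t := mul_pos hu ht
  have hlog : ∀ {r}, 0 < r → r ≤ exp (-X) → X ≤ -log r ∧ h (-log r) = log (L r) :=
    fun hr hrX => ⟨by linarith [(log_le_iff_le_exp hr).2 hrX], by simp [h, exp_log hr]⟩
  obtain ⟨hXt, hht⟩ := hlog ht htX
  obtain ⟨hXut, hhut⟩ := hlog hut hutX
  have hbound := abs_sub_le_mul_abs_sub_add_one hX hXt hXut
  rw [hht, hhut, log_mul hu.ne' ht.ne', show -(log u + log t) - -log t = -log u by ring,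
    abs_neg] at hbound
  calc L (u * t) = exp (log (L (u * t))) := (exp_log (hLpos _ hut)).symm
    _ ≤ exp (log (L t) + η * (|log u| + 1)) :=
      exp_le_exp.2 (by linarith [le_abs_self (log (L (u * t)) - log (L t))])
    _ = exp η * max (u ^ η) (u ^ (-η)) * L t := by
      rw [← exp_mul_abs_log hu hη.le, exp_add, exp_log (hLpos t ht), mul_add, mul_one, exp_add]
      ring

theorem exists_const_mul_rpow_le (hslow : SlowlyVaryingAtZero L)
    (hLpos : ∀ t : ℝ, 0 < t → 0 < L t) (hLcont : ContinuousOn L (Ioi 0)) (hη : 0 < η) :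
    ∃ c > 0, ∀ᶠ t in 𝓝[>] 0, c * t ^ η ≤ L t := by
  obtain ⟨t₀, ht₀, hpotter⟩ := hslow.exists_potter_bound hLpos hLcont hη
  have hLt₀ := hLpos t₀ ht₀
  refine ⟨L t₀ / (exp η * t₀ ^ η), by positivity, ?_⟩
  filter_upwards [Ioc_mem_nhdsGT ht₀] with t ht
  have hu : 1 ≤ t₀ / t := (one_le_div ht.1).2 ht.2
  have h := hpotter t ht (t₀ / t) (by positivity) (div_mul_cancel₀ _ ht.1.ne').le
  rw [div_mul_cancel₀ _ ht.1.ne', max_eq_left (rpow_le_rpow_of_exponent_le hu (by linarith)),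
    div_rpow ht₀.le ht.1.le] at h
  have htη : 0 < t ^ η := rpow_pos_of_pos ht.1 η
  rw [div_mul_eq_mul_div, div_le_iff₀ (by positivity)]
  calc L t₀ * t ^ η ≤ exp η * (t₀ ^ η / t ^ η) * L t * t ^ η := by gcongr
    _ = L t * (exp η * t₀ ^ η) := by field_simp

theorem exists_le_const_mul_rpow_neg (hslow : SlowlyVaryingAtZero L)
    (hLpos : ∀ t : ℝ, 0 < t → 0 < L t) (hLcont : ContinuousOn L (Ioi 0)) (hη : 0 < η) :
    ∃ C, ∀ᶠ t in 𝓝[>] 0, L t ≤ C * t ^ (-η) := by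
  obtain ⟨t₀, ht₀, hpotter⟩ := hslow.exists_potter_bound hLpos hLcont hη
  refine ⟨exp η * t₀ ^ η * L t₀, ?_⟩
  filter_upwards [Ioc_mem_nhdsGT ht₀] with t ht
  have hu : t / t₀ ≤ 1 := (div_le_one ht₀).2 ht.2
  have h := hpotter t₀ ⟨ht₀, le_rfl⟩ (t / t₀) (div_pos ht.1 ht₀)
    ((div_mul_cancel₀ _ ht₀.ne').trans_le ht.2)
  rw [div_mul_cancel₀ _ ht₀.ne',
    max_eq_right (rpow_le_rpow_of_exponent_ge (div_pos ht.1 ht₀) hu (by linarith)),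
    div_rpow ht.1.le ht₀.le, rpow_neg ht.1.le, rpow_neg ht₀.le] at h
  refine h.trans (le_of_eq ?_)
  rw [rpow_neg ht.1.le]
  field_simp

theorem eventually_integrableOn_rpow_mul (hslow : SlowlyVaryingAtZero L)
    (hLpos : ∀ t : ℝ, 0 < t → 0 < L t) (hLcont : ContinuousOn L (Ioi 0)) {β : ℝ}
    (hβ : -1 < β) : ∀ᶠ δ in 𝓝[>] 0, IntegrableOn (fun t => t ^ β * L t) (Ioc 0 δ) := by
  obtain ⟨η, hη, hβη⟩ : ∃ η, 0 < η ∧ -1 < β - η := ⟨(β + 1) / 2, by linarith, by linarith⟩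
  obtain ⟨C, hC⟩ := hslow.exists_le_const_mul_rpow_neg hLpos hLcont hη
  filter_upwards [hC.forall_Ioc_nhdsGT, self_mem_nhdsWithin] with δ hCδ (hδ : 0 < δ)
  refine Integrable.mono' (((intervalIntegrable_iff_integrableOn_Ioc_of_le hδ.le).1
    (intervalIntegral.intervalIntegrable_rpow' hβη)).const_mul C) ?_
    ((ae_restrict_iff' measurableSet_Ioc).2 (ae_of_all _ fun t ht => ?_))
  · refine ContinuousOn.aestronglyMeasurable ?_ measurableSet_Ioc
    exact (continuousOn_id.rpow_const fun t ht => Or.inl (ne_of_gt ht.1)).mul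
      (hLcont.mono Ioc_subset_Ioi_self)
  · have ht0 := ht.1
    have hLt := hLpos t ht0
    have hCt := hCδ t ht
    rw [rpow_neg ht0.le] at hCt
    rw [norm_of_nonneg (by positivity), rpow_sub ht0]
    calc t ^ β * L t ≤ t ^ β * (C * (t ^ η)⁻¹) := by gcongr
      _ = C * (t ^ β / t ^ η) := by ring

theorem eventually_tendsto_setIntegral_Ioc_mul_nhds_Gamma (hslow : SlowlyVaryingAtZero L)
    (hLpos : ∀ t : ℝ, 0 < t → 0 < L t) (hLcont : ContinuousOn L (Ioi 0)) {β : ℝ}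
    (hβ : -1 < β) : ∀ᶠ δ in 𝓝[>] 0, Tendsto (fun s =>
      ∫ x in Ioc 0 (s * δ), exp (-x) * x ^ β * (L (x * (1 / s)) / L (1 / s))) atTop
      (𝓝 (Gamma (β + 1))) := by
  obtain ⟨η, hη, hβη⟩ : ∃ η, 0 < η ∧ -1 < β - η := ⟨(β + 1) / 2, by linarith, by linarith⟩
  obtain ⟨t₀, ht₀, hpotter⟩ := hslow.exists_potter_bound hLpos hLcont hη
  filter_upwards [Ioc_mem_nhdsGT ht₀] with δ ⟨hδ, hδt₀⟩
  rw [Gamma_eq_integral (by linarith)]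
  simp_rw [add_sub_cancel_right]
  refine tendsto_setIntegral_Ioc_mul_of_dominated hδ
    (bound := fun x => exp η * (exp (-x) * x ^ (β + η) + exp (-x) * x ^ (β - η))) ?_ ?_ ?_ ?_
  · filter_upwards [eventually_gt_atTop 0] with s hs
    refine ContinuousOn.aestronglyMeasurable ?_ measurableSet_Ioi
    have hLs : ContinuousOn (fun x => L (x * (1 / s))) (Ioi 0) :=
      hLcont.comp (by fun_prop) fun x (hx : 0 < x) => mem_Ioi.2 (by positivity)
    exact ((continuous_exp.comp continuous_neg).continuousOn.mul
      (continuousOn_id.rpow_const fun x hx => Or.inl (ne_of_gt hx))).mul (hLs.div_const _)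
  · filter_upwards [eventually_ge_atTop t₀⁻¹] with s hs x ⟨hx, hxs⟩
    have hs0 : 0 < s := (inv_pos.2 ht₀).trans_le hs
    have h1s : 1 / s ∈ Ioc 0 t₀ := ⟨by positivity, by rw [one_div]; exact inv_le_of_inv_le₀ ht₀ hs⟩
    have hratio := hpotter (1 / s) h1s x hx (by rw [mul_one_div, div_le_iff₀ hs0]; nlinarith)
    have hL1s := hLpos _ h1s.1
    have hLxs := hLpos (x * (1 / s)) (by positivity)
    rw [norm_of_nonneg (by positivity)]
    calc exp (-x) * x ^ β * (L (x * (1 / s)) / L (1 / s))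
        ≤ exp (-x) * x ^ β * (exp η * (x ^ η + x ^ (-η))) := by
          gcongr
          rw [div_le_iff₀ hL1s]
          refine hratio.trans (mul_le_mul_of_nonneg_right (mul_le_mul_of_nonneg_left
            (max_le_add_of_nonneg (by positivity) (by positivity)) (exp_pos η).le) hL1s.le)
      _ = exp η * (exp (-x) * x ^ (β + η) + exp (-x) * x ^ (β - η)) := by
          rw [rpow_add hx, rpow_sub hx, rpow_neg hx.le]
          ring
  · have hint : ∀ r : ℝ, -1 < r → IntegrableOn (fun x => exp (-x) * x ^ r) (Ioi 0) :=
      fun r hr => by simpa using GammaIntegral_convergent (s := r + 1) (by linarith)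
    exact ((hint _ (by linarith)).add (hint _ (by linarith))).const_mul _
  · intro x hx
    simpa [one_div] using ((hslow x hx).comp tendsto_inv_atTop_nhdsGT_zero).const_mul
      (exp (-x) * x ^ β)

theorem eventually_tendsto_setIntegral_Ioc_div_nhds_one (hslow : SlowlyVaryingAtZero L)
    (hLpos : ∀ t : ℝ, 0 < t → 0 < L t) (hLcont : ContinuousOn L (Ioi 0)) {β : ℝ}
    (hβ : -1 < β) :
    ∀ᶠ δ in 𝓝[>] 0, Tendsto (fun s => (∫ t in Ioc 0 δ, exp (-s * t) * (t ^ β * L t)) /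
      (Gamma (β + 1) * s ^ (-(β + 1)) * L (1 / s))) atTop (𝓝 1) := by
  filter_upwards [hslow.eventually_tendsto_setIntegral_Ioc_mul_nhds_Gamma hLpos hLcont hβ,
    self_mem_nhdsWithin] with δ hlim (hδ : 0 < δ)
  have hΓ := Gamma_pos_of_pos (show 0 < β + 1 by linarith)
  have hlim' := hlim.div_const (Gamma (β + 1))
  rw [div_self hΓ.ne'] at hlim'
  refine hlim'.congr' ?_
  filter_upwards [eventually_gt_atTop 0] with s hs
  have hL1s := hLpos _ (one_div_pos.2 hs)
  rw [setIntegral_Ioc_exp_neg_mul_rpow_mul_eq hs hδ.le hL1s.ne']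
  have := rpow_pos_of_pos hs (-(β + 1))
  field_simp

theorem tendsto_div_gamma_mul_of_norm_le_mul_exp (hslow : SlowlyVaryingAtZero L)
    (hLpos : ∀ t : ℝ, 0 < t → 0 < L t) (hLcont : ContinuousOn L (Ioi 0)) {β : ℝ} (hβ : -1 < β)
    {R : ℝ → ℂ} {M δ : ℝ} (hδ : 0 < δ) (hR : ∀ᶠ s in atTop, ‖R s‖ ≤ M * exp (-δ * s)) :
    Tendsto (fun s => R s / ((Gamma (β + 1) * s ^ (-(β + 1)) * L (1 / s) : ℝ) : ℂ)) atTop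
      (𝓝 0) := by
  obtain ⟨c, hc, hL⟩ := hslow.exists_const_mul_rpow_le hLpos hLcont one_pos
  have hΓ := Gamma_pos_of_pos (show 0 < β + 1 by linarith)
  refine tendsto_div_of_norm_le_mul_exp hδ (mul_pos hΓ hc) (p := β + 2) hR ?_
  filter_upwards [tendsto_inv_atTop_nhdsGT_zero.eventually hL, eventually_gt_atTop 0]
    with s hLs hs
  rw [rpow_one, ← one_div] at hLs
  calc Gamma (β + 1) * c * s ^ (-(β + 2))
      = Gamma (β + 1) * s ^ (-(β + 1)) * (c * (1 / s)) := by
        rw [show -(β + 2) = -(β + 1) + -1 by ring, rpow_add hs, rpow_neg_one]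
        ring
    _ ≤ Gamma (β + 1) * s ^ (-(β + 1)) * L (1 / s) := by gcongr

end SlowlyVaryingAtZero

theorem laplace_eq_setIntegral_Ioc_add_setIntegral_Ioi {f : ℝ → ℂ} {s δ : ℝ} (hδ : 0 ≤ δ)
    (h₁ : IntegrableOn (fun t => (exp (-s * t) : ℂ) * f t) (Ioc 0 δ))
    (h₂ : IntegrableOn (fun t => (exp (-s * t) : ℂ) * f t) (Ioi δ)) :
    laplace f s = (∫ t in Ioc 0 δ, (exp (-s * t) : ℂ) * f t) +
      ∫ t in Ioi δ, (exp (-s * t) : ℂ) * f t := by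
  rw [laplace, ← Ioc_union_Ioi_eq_Ioi hδ,
    setIntegral_union (Ioc_disjoint_Ioi le_rfl) measurableSet_Ioi h₁ h₂]

namespace IsLFunctionC

variable {f : ℝ → ℂ}

theorem eventually_integrableOn_Ioc (hf : IsLFunctionC f) :
    ∀ᶠ δ in 𝓝[>] 0, IntegrableOn f (Ioc 0 δ) := by
  obtain ⟨T, hT, hfT⟩ := hf.int_zero
  filter_upwards [Ioc_mem_nhdsGT hT] with δ hδ using hfT.mono_set (Ioc_subset_Ioc_right hδ.2)

theorem exists_integrableOn_Ioi (hf : IsLFunctionC f) {δ : ℝ} (hδ : 0 < δ) :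
    ∃ s₀ : ℝ, IntegrableOn (fun t => f t * exp (-s₀ * t)) (Ioi δ) := by
  obtain ⟨s₀, T, -, hT⟩ := hf.int_top
  refine ⟨s₀, IntegrableOn.mono_set (t := Icc δ (max δ T) ∪ Ioi T) ?_ fun t (ht : δ < t) => ?_⟩
  · refine IntegrableOn.union (IntegrableOn.mul_continuousOn ?_ (by fun_prop) isCompact_Icc) hT
    exact (intervalIntegrable_iff_integrableOn_Icc_of_le (le_max_left _ _)).1
      (hf.loc _ _ hδ (le_max_left _ _))
  · by_cases htT : t ≤ T
    · exact Or.inl ⟨ht.le, htT.trans (le_max_right _ _)⟩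
    · exact Or.inr (lt_of_not_ge htT)

theorem exists_norm_setIntegral_Ioi_le (hf : IsLFunctionC f) {δ : ℝ} (hδ : 0 < δ) :
    ∃ s₀ M : ℝ, ∀ s ≥ s₀, IntegrableOn (fun t => (exp (-s * t) : ℂ) * f t) (Ioi δ) ∧
      ‖∫ t in Ioi δ, (exp (-s * t) : ℂ) * f t‖ ≤ M * exp (-δ * s) := by
  obtain ⟨s₀, hint⟩ := hf.exists_integrableOn_Ioi hδ
  refine ⟨s₀, exp (s₀ * δ) * ∫ t in Ioi δ, ‖f t * exp (-s₀ * t)‖, fun s hs => ?_⟩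
  have hsplit : ∀ t, (exp (-s * t) : ℂ) * f t =
      (exp (-(s - s₀) * t) : ℂ) * (f t * exp (-s₀ * t)) := by
    intro t
    rw [show -s * t = -(s - s₀) * t + -s₀ * t by ring, exp_add, Complex.ofReal_mul]
    ring
  have hweight : ∀ t ∈ Ioi δ, ‖(exp (-(s - s₀) * t) : ℂ)‖ ≤ exp (-(s - s₀) * δ) := by
    intro t ht
    rw [Complex.norm_real, norm_of_nonneg (exp_pos _).le]
    exact exp_le_exp.2 (by nlinarith [mem_Ioi.1 ht])
  have hint_s : IntegrableOn (fun t => (exp (-s * t) : ℂ) * f t) (Ioi δ) := by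
    simp_rw [hsplit]
    exact hint.bdd_mul (by fun_prop) ((ae_restrict_iff' measurableSet_Ioi).2 (ae_of_all _ hweight))
  refine ⟨hint_s, ?_⟩
  calc ‖∫ t in Ioi δ, (exp (-s * t) : ℂ) * f t‖
      ≤ ∫ t in Ioi δ, exp (-(s - s₀) * δ) * ‖f t * exp (-s₀ * t)‖ := by
        refine norm_integral_le_of_norm_le (hint.norm.const_mul _)
          ((ae_restrict_iff' measurableSet_Ioi).2 (ae_of_all _ fun t ht => ?_))
        rw [hsplit, norm_mul]
        exact mul_le_mul_of_nonneg_right (hweight t ht) (norm_nonneg _)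
    _ = exp (s₀ * δ) * (∫ t in Ioi δ, ‖f t * exp (-s₀ * t)‖) * exp (-δ * s) := by
        rw [integral_const_mul, mul_right_comm, ← exp_add]
        ring_nf

end IsLFunctionC

theorem eventually_norm_sub_mul_le_of_tendsto_div {α : Type*} {l : Filter α} {f : α → ℂ}
    {g : α → ℝ} {B : ℂ} (hg : ∀ᶠ a in l, 0 < g a) (h : Tendsto (fun a => f a / g a) l (𝓝 B))
    {ε : ℝ} (hε : 0 < ε) : ∀ᶠ a in l, ‖f a - B * g a‖ ≤ ε * g a := by
  filter_upwards [hg, Metric.tendsto_nhds.1 h ε hε] with a hga ha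
  rw [dist_eq_norm] at ha
  have hgC : (g a : ℂ) ≠ 0 := Complex.ofReal_ne_zero.2 hga.ne'
  rw [show f a - B * g a = (f a / g a - B) * g a by field_simp, norm_mul, Complex.norm_real,
    norm_of_nonneg hga.le]
  exact mul_le_mul_of_nonneg_right ha.le hga.le

theorem norm_setIntegral_sub_mul_le {α : Type*} [MeasurableSpace α] {μ : Measure α} {S : Set α}
    (hS : MeasurableSet S) {w G : α → ℝ} {F : α → ℂ} {B : ℂ} {ε : ℝ}
    (hF : IntegrableOn (fun x => (w x : ℂ) * F x) S μ)
    (hG : IntegrableOn (fun x => w x * G x) S μ) (hw : ∀ x ∈ S, 0 ≤ w x)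
    (h : ∀ x ∈ S, ‖F x - B * G x‖ ≤ ε * G x) :
    ‖∫ x in S, (w x : ℂ) * F x ∂μ - B * ↑(∫ x in S, w x * G x ∂μ)‖ ≤
      ε * ∫ x in S, w x * G x ∂μ := by
  have hsub : ∫ x in S, ((w x : ℂ) * F x - B * ((w x * G x : ℝ) : ℂ)) ∂μ =
      ∫ x in S, (w x : ℂ) * F x ∂μ - B * ↑(∫ x in S, w x * G x ∂μ) := by
    rw [integral_sub hF ?_, integral_const_mul, integral_complex_ofReal]
    exact hG.ofReal.const_mul B
  rw [← hsub, ← integral_const_mul]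
  refine norm_integral_le_of_norm_le (hG.const_mul ε)
    ((ae_restrict_iff' hS).2 (ae_of_all _ fun x hx => ?_))
  calc ‖(w x : ℂ) * F x - B * ((w x * G x : ℝ) : ℂ)‖ = w x * ‖F x - B * G x‖ := by
        rw [Complex.ofReal_mul, show (w x : ℂ) * F x - B * (w x * G x) =
          w x * (F x - B * G x) by ring, norm_mul, Complex.norm_real, norm_of_nonneg (hw x hx)]
    _ ≤ ε * (w x * G x) := by nlinarith [h x hx, hw x hx]

theorem norm_add_div_sub_le {H R B : ℂ} {M D ε : ℝ} (hD : D ≠ 0) (hε : 0 ≤ ε)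
    (hH : ‖H - B * M‖ ≤ ε * M) :
    ‖(H + R) / D - B‖ ≤ ε * |M / D| + ‖B‖ * |M / D - 1| + ‖R / D‖ := by
  have hDC : (D : ℂ) ≠ 0 := Complex.ofReal_ne_zero.2 hD
  have hsplit : (H + R) / D - B = (H - B * M) / D + B * ((M / D : ℝ) - 1 : ℂ) + R / D := by
    push_cast
    field_simp
    ring
  rw [hsplit]
  refine (norm_add₃_le ..).trans (add_le_add_three ?_ ?_ le_rfl)
  · rw [norm_div, Complex.norm_real, norm_eq_abs, abs_div, mul_div_assoc']
    gcongr
    exact hH.trans (mul_le_mul_of_nonneg_left (le_abs_self M) hε)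
  · rw [norm_mul, ← Complex.ofReal_one, ← Complex.ofReal_sub, Complex.norm_real, norm_eq_abs]

theorem tendsto_div_of_forall_head_tail {α : Type*} {l : Filter α} {u : α → ℂ} {D : α → ℝ}
    {B : ℂ} (h : ∀ ε > 0, ∃ (H R : α → ℂ) (M : α → ℝ), (∀ᶠ a in l, u a = H a + R a) ∧
      Tendsto (fun a => M a / D a) l (𝓝 1) ∧ Tendsto (fun a => R a / D a) l (𝓝 0) ∧
      ∀ᶠ a in l, ‖H a - B * M a‖ ≤ ε * M a) :
    Tendsto (fun a => u a / D a) l (𝓝 B) := by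
  rw [Metric.tendsto_nhds]
  intro ε hε
  have hε' : 0 < ε / (‖B‖ + 3) := by positivity
  obtain ⟨H, R, M, hu, hM, hR, hH⟩ := h _ hε'
  filter_upwards [hu, hM.eventually (Ioo_mem_nhds one_pos one_lt_two),
    Metric.tendsto_nhds.1 hM _ hε', Metric.tendsto_nhds.1 hR _ hε', hH]
    with a hua hM₂ hM₁ hR₀ hH
  have hD : D a ≠ 0 := by
    rintro hD
    simp [hD] at hM₂
  rw [Real.dist_eq] at hM₁
  rw [dist_zero_right] at hR₀
  rw [dist_eq_norm, hua]
  calc _ ≤ ε / (‖B‖ + 3) * |M a / D a| + ‖B‖ * |M a / D a - 1| + ‖R a / D a‖ :=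
        norm_add_div_sub_le hD hε'.le hH
    _ < ε / (‖B‖ + 3) * 2 + ‖B‖ * (ε / (‖B‖ + 3)) + ε / (‖B‖ + 3) := by
        rw [abs_of_pos hM₂.1]
        refine add_lt_add_of_le_of_lt (add_le_add ?_ ?_) hR₀
        · exact mul_le_mul_of_nonneg_left hM₂.2.le hε'.le
        · exact mul_le_mul_of_nonneg_left hM₁.le (norm_nonneg B)
    _ = ε := by field_simp; ring

/-- Abelian asymptotics of the Laplace transform (Doetsch): if `f(t) ~ B t^β L(t)` as
`t → 0⁺` with `β > -1` and `L` slowly varying at `0`, then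
`f̃(s) ~ B Γ(β+1) s^{-(β+1)} L(1/s)` as `s → ∞` along the positive reals. -/
theorem laplace_asymptotic_of_asymptotic_at_zero
    (f : ℝ → ℂ) (hL : IsLFunctionC f) (B : ℂ) (β : ℝ) (hβ : -1 < β)
    (L : ℝ → ℝ) (hLpos : ∀ t : ℝ, 0 < t → 0 < L t) (hLcont : ContinuousOn L (Set.Ioi 0))
    (hslow : SlowlyVaryingAtZero L)
    (hasymp : Tendsto (fun t => f t / ((t : ℂ) ^ (β : ℂ) * (L t : ℂ)))
        (nhdsWithin 0 (Set.Ioi 0)) (nhds B)) :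
    Tendsto (fun s : ℝ =>
        laplace f s / ((Real.Gamma (β + 1) * s ^ (-(β + 1)) * L (1 / s) : ℝ) : ℂ))
      atTop (nhds B) := by
  have hasymp' : Tendsto (fun t => f t / ((t ^ β * L t : ℝ) : ℂ)) (𝓝[>] 0) (𝓝 B) := by
    refine hasymp.congr' (eventually_nhdsWithin_of_forall fun t (ht : 0 < t) => ?_)
    simp only [Complex.ofReal_mul, Complex.ofReal_cpow ht.le]
  have hg : ∀ᶠ t in 𝓝[>] 0, 0 < t ^ β * L t :=
    eventually_nhdsWithin_of_forall fun t ht => mul_pos (rpow_pos_of_pos ht β) (hLpos t ht)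
  refine tendsto_div_of_forall_head_tail fun ε hε => ?_
  obtain ⟨δ, hclose, hmodel, hgδ, hfδ, hδ⟩ :=
    ((eventually_norm_sub_mul_le_of_tendsto_div hg hasymp' hε).forall_Ioc_nhdsGT.and <|
      (hslow.eventually_tendsto_setIntegral_Ioc_div_nhds_one hLpos hLcont hβ).and <|
      (hslow.eventually_integrableOn_rpow_mul hLpos hLcont hβ).and <|
      hL.eventually_integrableOn_Ioc.and self_mem_nhdsWithin).exists
  obtain ⟨s₀, M, htail⟩ := hL.exists_norm_setIntegral_Ioi_le hδ
  have hhead : ∀ s : ℝ, IntegrableOn (fun t => (exp (-s * t) : ℂ) * f t) (Ioc 0 δ) := fun s =>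
    hfδ.continuousOn_mul_of_subset (by fun_prop) isCompact_Icc measurableSet_Ioc
      Ioc_subset_Icc_self
  refine ⟨fun s => ∫ t in Ioc 0 δ, (exp (-s * t) : ℂ) * f t,
    fun s => ∫ t in Ioi δ, (exp (-s * t) : ℂ) * f t,
    fun s => ∫ t in Ioc 0 δ, exp (-s * t) * (t ^ β * L t), ?_, hmodel, ?_, .of_forall fun s => ?_⟩
  · filter_upwards [eventually_ge_atTop s₀] with s hs
    exact laplace_eq_setIntegral_Ioc_add_setIntegral_Ioi (le_of_lt hδ) (hhead s) (htail s hs).1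
  · exact hslow.tendsto_div_gamma_mul_of_norm_le_mul_exp hLpos hLcont hβ hδ
      (eventually_atTop.2 ⟨s₀, fun s hs => (htail s hs).2⟩)
  · exact norm_setIntegral_sub_mul_le measurableSet_Ioc (hhead s)
      (hgδ.continuousOn_mul_of_subset (by fun_prop) isCompact_Icc measurableSet_Ioc
        Ioc_subset_Icc_self) (fun t _ => (exp_pos _).le) hclose
end
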